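/- arXiv:2311.11188 — 4 statements merged into one kernel-verified Lean document; each statement's English description precedes it below -/
import Mathlib

section
/- Let σ_{TX} ∈ M(ρ_X) be positive definite such that σ_T, (id_T⊗R)(σ_{TX}) and R(ρ_X) are positive definite. Then Re Tr(σ_{TX} · Ω_{α,β}(σ_{TX})) = α · I(T;X)[σ_{TX}] + (1−α) · H(T)[σ_T] − β · I(T;Y)[(id_T⊗R)(σ_{TX})], where I(T;Y)[ω_{TY}] = D(ω_{TY} ‖ ω_T⊗ω_Y) for the partial traces ω_T, ω_Y of ω_{TY} = (id_T⊗R)(σ_{TX}). -/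
noncomputable section
open scoped Matrix Kronecker ComplexOrder

/-- Matrix logarithm via the real continuous functional calculus. -/
def mlog {n : Type*} [Fintype n] [DecidableEq n] (A : Matrix n n ℂ) : Matrix n n ℂ :=
  cfc Real.log A

/-- Quantum relative entropy `D(ρ‖σ) = Re Tr(ρ (log ρ − log σ))`. -/
def relEnt {n : Type*} [Fintype n] [DecidableEq n] (ρ σ : Matrix n n ℂ) : ℝ :=
  (Matrix.trace (ρ * (mlog ρ - mlog σ))).re

/-- A positive definite density matrix. -/
def IsPDDensity {n : Type*} [Fintype n] (ρ : Matrix n n ℂ) : Prop :=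
  ρ.PosDef ∧ ρ.trace = 1

/-- A density matrix. -/
def IsDensity {n : Type*} [Fintype n] (ρ : Matrix n n ℂ) : Prop :=
  ρ.PosSemidef ∧ ρ.trace = 1

/-- Partial trace over the first tensor factor. -/
def ptrace1 {m n : Type*} [Fintype m] (A : Matrix (m × n) (m × n) ℂ) : Matrix n n ℂ :=
  Matrix.of fun i j => ∑ t, A (t, i) (t, j)

/-- Partial trace over the second tensor factor. -/
def ptrace2 {m n : Type*} [Fintype n] (A : Matrix (m × n) (m × n) ℂ) : Matrix m m ℂ :=
  Matrix.of fun i j => ∑ x, A (i, x) (j, x)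

/-- The quantum channel with Kraus operators `K i`. -/
def channel {dX dY m : ℕ} (K : Fin m → Matrix (Fin dY) (Fin dX) ℂ)
    (A : Matrix (Fin dX) (Fin dX) ℂ) : Matrix (Fin dY) (Fin dY) ℂ :=
  ∑ i, K i * A * (K i)ᴴ

/-- The adjoint of the quantum channel with Kraus operators `K i`. -/
def channelAdj {dX dY m : ℕ} (K : Fin m → Matrix (Fin dY) (Fin dX) ℂ)
    (B : Matrix (Fin dY) (Fin dY) ℂ) : Matrix (Fin dX) (Fin dX) ℂ :=
  ∑ i, (K i)ᴴ * B * K i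

/-- The channel `id_T ⊗ R`, with Kraus operators `I_T ⊗ K i`. -/
def extChannel {dT dX dY m : ℕ} (K : Fin m → Matrix (Fin dY) (Fin dX) ℂ)
    (A : Matrix (Fin dT × Fin dX) (Fin dT × Fin dX) ℂ) :
    Matrix (Fin dT × Fin dY) (Fin dT × Fin dY) ℂ :=
  ∑ i, ((1 : Matrix (Fin dT) (Fin dT) ℂ) ⊗ₖ K i) * A
      * ((1 : Matrix (Fin dT) (Fin dT) ℂ) ⊗ₖ K i)ᴴ

/-- The adjoint `(id_T ⊗ R)*`. -/
def extChannelAdj {dT dX dY m : ℕ} (K : Fin m → Matrix (Fin dY) (Fin dX) ℂ)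
    (B : Matrix (Fin dT × Fin dY) (Fin dT × Fin dY) ℂ) :
    Matrix (Fin dT × Fin dX) (Fin dT × Fin dX) ℂ :=
  ∑ i, ((1 : Matrix (Fin dT) (Fin dT) ℂ) ⊗ₖ K i)ᴴ * B
      * ((1 : Matrix (Fin dT) (Fin dT) ℂ) ⊗ₖ K i)

/-- The operator `Ω_{α,β}(σ_{TX})` of the quantum information bottleneck. -/
def OmegaIB {dT dX dY m : ℕ} (K : Fin m → Matrix (Fin dY) (Fin dX) ℂ) (α β : ℝ)
    (ρX : Matrix (Fin dX) (Fin dX) ℂ)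
    (σ : Matrix (Fin dT × Fin dX) (Fin dT × Fin dX) ℂ) :
    Matrix (Fin dT × Fin dX) (Fin dT × Fin dX) ℂ :=
  α • mlog σ - α • ((1 : Matrix (Fin dT) (Fin dT) ℂ) ⊗ₖ mlog ρX)
    + (β - 1) • (mlog (ptrace2 σ) ⊗ₖ (1 : Matrix (Fin dX) (Fin dX) ℂ))
    + β • extChannelAdj K
        ((1 : Matrix (Fin dT) (Fin dT) ℂ) ⊗ₖ mlog (channel K ρX)
          - mlog (extChannel K σ))

/-- The quantum mutual information of a bipartite state:
`I(1;2)[ω] = D(ω ‖ ω_1 ⊗ ω_2)`. -/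
def mutualInfo {m n : Type*} [Fintype m] [Fintype n] [DecidableEq m] [DecidableEq n]
    (ω : Matrix (m × n) (m × n) ℂ) : ℝ :=
  relEnt ω (ptrace2 ω ⊗ₖ ptrace1 ω)

/-- The von Neumann entropy `H(σ) = −Re Tr(σ log σ)`. -/
def vnEntropy {n : Type*} [Fintype n] [DecidableEq n] (σ : Matrix n n ℂ) : ℝ :=
  -(Matrix.trace (σ * mlog σ)).re



/-! ### Auxiliary lemmas -/

namespace QIBProof

open Matrix

variable {n : Type*} [Fintype n] [DecidableEq n]

/-- Auxiliary star algebra homomorphism for computing `cfc` of a unitary conjugation of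
a real diagonal matrix. -/
@[simps]
noncomputable def conjDiagHom (U : unitary (Matrix n n ℂ)) (c : n → ℝ) (s : Set ℝ)
    (hmem : ∀ i, c i ∈ s) : C(s, ℝ) →⋆ₐ[ℝ] Matrix n n ℂ where
  toFun g := (U : Matrix n n ℂ) *
      diagonal (Complex.ofReal ∘ g ∘ fun i => (⟨c i, hmem i⟩ : s)) * star (U : Matrix n n ℂ)
  map_one' := by simp [Pi.one_def (M := fun _ : n ↦ ℂ)]
  map_mul' f g := by
    have h {a b c d e f : Matrix n n ℂ} : (a * b * c) * (d * e * f) = a * (b * (c * d) * e) * f := by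
      simp only [mul_assoc]
    simp only [h, ContinuousMap.coe_mul, SetLike.coe_mem, Unitary.star_mul_self_of_mem, mul_one,
      diagonal_mul_diagonal, Function.comp_apply]
    congr! with i
    simp
  map_zero' := by simp [Pi.zero_def (M := fun _ : n ↦ ℂ)]
  map_add' f g := by
    simp only [ContinuousMap.coe_add, ← add_mul, ← mul_add, diagonal_add, Function.comp_apply]
    congr! with i
    simp
  commutes' r := by
    simp only [Function.comp_def, algebraMap_apply, smul_eq_mul, mul_one]
    rw [← mul_one (algebraMap _ _ _), ← Unitary.coe_mul_star_self U,
      ← Algebra.left_comm, Unitary.coe_star, mul_assoc]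
    congr!
  map_star' f := by
    simp only [star_trivial, StarMul.star_mul, star_star, star_eq_conjTranspose (diagonal _),
      diagonal_conjTranspose, mul_assoc]
    congr!
    ext
    simp

lemma cfc_conj_diagonal (U : unitary (Matrix n n ℂ)) (c : n → ℝ) (f : ℝ → ℝ) :
    cfc f ((U : Matrix n n ℂ) * diagonal (Complex.ofReal ∘ c) * star (U : Matrix n n ℂ))
      = (U : Matrix n n ℂ) * diagonal (Complex.ofReal ∘ f ∘ c) * star (U : Matrix n n ℂ) := by
  set M := (U : Matrix n n ℂ) * diagonal (Complex.ofReal ∘ c) * star (U : Matrix n n ℂ) with hM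
  have hD : star (diagonal (Complex.ofReal ∘ c)) = diagonal (Complex.ofReal ∘ c) := by
    ext i j
    simp only [Matrix.star_apply, Matrix.diagonal_apply, Function.comp_apply]
    by_cases h : i = j
    · subst h; simp
    · simp [h, Ne.symm h]
  have hMsa : _root_.IsSelfAdjoint M := by
    rw [isSelfAdjoint_iff, hM, StarMul.star_mul, StarMul.star_mul, star_star, hD, ← mul_assoc]
  have hspecC : spectrum ℂ M = Set.range (Complex.ofReal ∘ c) := by
    rw [hM, Unitary.spectrum_star_right_conjugate, spectrum_diagonal]
  have hmem : ∀ i, c i ∈ spectrum ℝ M := fun i => by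
    rw [← spectrum.algebraMap_mem_iff ℂ, Complex.coe_algebraMap, hspecC]
    exact ⟨i, rfl⟩
  have h0 : FiniteDimensional ℝ C(spectrum ℝ M, ℝ) :=
    FiniteDimensional.of_injective (ContinuousMap.coeFnLinearMap ℝ (M := ℝ))
      DFunLike.coe_injective
  have hcont : Continuous (conjDiagHom U c (spectrum ℝ M) hmem) :=
    by
      have := LinearMap.continuous_of_finiteDimensional
        (conjDiagHom U c (spectrum ℝ M) hmem).toAlgHom.toLinearMap
      exact this
  have hid : conjDiagHom U c (spectrum ℝ M) hmem
      (ContinuousMap.restrict (spectrum ℝ M) (ContinuousMap.id ℝ)) = M := by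
    conv_rhs => rw [hM]
    congr!
  have := cfcHom_eq_of_continuous_of_map_id hMsa (conjDiagHom U c (spectrum ℝ M) hmem) hcont hid
  rw [cfc_apply f M hMsa (by rw [continuousOn_iff_continuous_restrict]; fun_prop), this]
  simp only [conjDiagHom_apply, ContinuousMap.coe_mk, Function.comp_def, Set.restrict_apply]

lemma conjTranspose_kron' {p q r s : Type*} (A : Matrix p q ℂ) (B : Matrix r s ℂ) :
    (A ⊗ₖ B)ᴴ = Aᴴ ⊗ₖ Bᴴ := by
  ext ⟨i, j⟩ ⟨k, l⟩
  simp [Matrix.conjTranspose_apply, Matrix.kroneckerMap_apply]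

lemma mlog_eq (A : Matrix n n ℂ) (hA : A.IsHermitian) :
    mlog A = (hA.eigenvectorUnitary : Matrix n n ℂ)
      * diagonal (Complex.ofReal ∘ Real.log ∘ hA.eigenvalues)
      * star (hA.eigenvectorUnitary : Matrix n n ℂ) := by
  conv_lhs => rw [mlog, hA.spectral_theorem]
  exact cfc_conj_diagonal hA.eigenvectorUnitary hA.eigenvalues Real.log

lemma mlog_kron {p q : Type*} [Fintype p] [Fintype q] [DecidableEq p] [DecidableEq q]
    (A : Matrix p p ℂ) (B : Matrix q q ℂ) (hA : A.PosDef) (hB : B.PosDef) :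
    mlog (A ⊗ₖ B) = mlog A ⊗ₖ (1 : Matrix q q ℂ) + (1 : Matrix p p ℂ) ⊗ₖ mlog B := by
  have hAh := hA.1
  have hBh := hB.1
  set U := hAh.eigenvectorUnitary with hU
  set V := hBh.eigenvectorUnitary with hV
  have hWmem : (U : Matrix p p ℂ) ⊗ₖ (V : Matrix q q ℂ) ∈ unitary (Matrix (p × q) (p × q) ℂ) := by
    constructor
    · rw [Matrix.star_eq_conjTranspose, conjTranspose_kron', ← Matrix.mul_kronecker_mul,
        ← Matrix.star_eq_conjTranspose, ← Matrix.star_eq_conjTranspose,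
        U.prop.1, V.prop.1, Matrix.one_kronecker_one]
    · rw [Matrix.star_eq_conjTranspose, conjTranspose_kron', ← Matrix.mul_kronecker_mul,
        ← Matrix.star_eq_conjTranspose, ← Matrix.star_eq_conjTranspose,
        U.prop.2, V.prop.2, Matrix.one_kronecker_one]
  set W : unitary (Matrix (p × q) (p × q) ℂ) := ⟨_, hWmem⟩ with hW
  have hWc : (W : Matrix (p × q) (p × q) ℂ) = (U : Matrix p p ℂ) ⊗ₖ (V : Matrix q q ℂ) := rfl
  have hstarW : star (W : Matrix (p × q) (p × q) ℂ)
      = star (U : Matrix p p ℂ) ⊗ₖ star (V : Matrix q q ℂ) := by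
    rw [hWc, Matrix.star_eq_conjTranspose, conjTranspose_kron', ← Matrix.star_eq_conjTranspose,
      ← Matrix.star_eq_conjTranspose]
  have key : ∀ (c : p → ℝ) (d : q → ℝ),
      ((U : Matrix p p ℂ) * diagonal (Complex.ofReal ∘ c) * star (U : Matrix p p ℂ))
        ⊗ₖ ((V : Matrix q q ℂ) * diagonal (Complex.ofReal ∘ d) * star (V : Matrix q q ℂ))
      = (W : Matrix (p × q) (p × q) ℂ)
        * diagonal (Complex.ofReal ∘ fun x : p × q => c x.1 * d x.2)
        * star (W : Matrix (p × q) (p × q) ℂ) := by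
    intro c d
    have hfun : (fun mn : p × q => (Complex.ofReal ∘ c) mn.1 * (Complex.ofReal ∘ d) mn.2)
        = (Complex.ofReal ∘ fun x : p × q => c x.1 * d x.2) := by
      funext x
      simp [Function.comp]
    rw [Matrix.mul_kronecker_mul, Matrix.mul_kronecker_mul, Matrix.diagonal_kronecker_diagonal,
      hWc, hstarW, hfun]
  have hAB : A ⊗ₖ B = (W : Matrix (p × q) (p × q) ℂ)
      * diagonal (Complex.ofReal ∘ fun x : p × q => hAh.eigenvalues x.1 * hBh.eigenvalues x.2)
      * star (W : Matrix (p × q) (p × q) ℂ) := by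
    conv_lhs => rw [hAh.spectral_theorem, hBh.spectral_theorem]
    exact key _ _
  have hlog : (Complex.ofReal ∘ Real.log ∘ fun x : p × q =>
        hAh.eigenvalues x.1 * hBh.eigenvalues x.2)
      = (fun x : p × q => Complex.ofReal (Real.log (hAh.eigenvalues x.1))
          + Complex.ofReal (Real.log (hBh.eigenvalues x.2))) := by
    funext x
    simp only [Function.comp_apply]
    rw [Real.log_mul (hA.eigenvalues_pos x.1).ne' (hB.eigenvalues_pos x.2).ne']
    push_cast
    ring
  rw [mlog, hAB, cfc_conj_diagonal, hlog]
  have hdiag : diagonal (fun x : p × q => Complex.ofReal (Real.log (hAh.eigenvalues x.1))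
          + Complex.ofReal (Real.log (hBh.eigenvalues x.2)))
      = diagonal (fun x : p × q => Complex.ofReal (Real.log (hAh.eigenvalues x.1)))
        + diagonal (fun x : p × q => Complex.ofReal (Real.log (hBh.eigenvalues x.2))) := by
    rw [Matrix.diagonal_add]
  rw [hdiag, mul_add, add_mul]
  congr 1
  · have h1 : (1 : Matrix q q ℂ)
        = (V : Matrix q q ℂ) * diagonal (Complex.ofReal ∘ fun _ : q => (1 : ℝ))
          * star (V : Matrix q q ℂ) := by
      have : diagonal (Complex.ofReal ∘ fun _ : q => (1 : ℝ)) = (1 : Matrix q q ℂ) := by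
        simp [Matrix.diagonal_one, Function.comp_def]
      rw [this, mul_one, V.prop.2]
    rw [mlog_eq A hAh, h1, key]
    have : (Complex.ofReal ∘ fun x : p × q => (Real.log ∘ hAh.eigenvalues) x.1 * 1)
        = fun x : p × q => Complex.ofReal (Real.log (hAh.eigenvalues x.1)) := by
      funext x
      simp
    rw [this]
  · have h1 : (1 : Matrix p p ℂ)
        = (U : Matrix p p ℂ) * diagonal (Complex.ofReal ∘ fun _ : p => (1 : ℝ))
          * star (U : Matrix p p ℂ) := by
      have : diagonal (Complex.ofReal ∘ fun _ : p => (1 : ℝ)) = (1 : Matrix p p ℂ) := by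
        simp [Matrix.diagonal_one, Function.comp_def]
      rw [this, mul_one, U.prop.2]
    rw [mlog_eq B hBh, h1, key]
    have : (Complex.ofReal ∘ fun x : p × q => 1 * (Real.log ∘ hBh.eigenvalues) x.2)
        = fun x : p × q => Complex.ofReal (Real.log (hBh.eigenvalues x.2)) := by
      funext x
      simp
    rw [this]

section TraceLemmas

variable {a b : Type*} [Fintype a] [Fintype b] [DecidableEq a] [DecidableEq b]

lemma trace_mul_kron_one (σ : Matrix (a × b) (a × b) ℂ) (A : Matrix a a ℂ) :
    Matrix.trace (σ * (A ⊗ₖ (1 : Matrix b b ℂ))) = Matrix.trace (ptrace2 σ * A) := by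
  simp only [Matrix.trace, Matrix.diag, Matrix.mul_apply, Matrix.kroneckerMap_apply,
    Matrix.one_apply, ptrace2, Matrix.of_apply, Fintype.sum_prod_type, mul_ite, mul_one,
    mul_zero, Finset.sum_ite_eq', Finset.mem_univ, if_true, Finset.sum_mul]
  exact Finset.sum_congr rfl fun t _ => Finset.sum_comm

lemma trace_mul_one_kron (σ : Matrix (a × b) (a × b) ℂ) (B : Matrix b b ℂ) :
    Matrix.trace (σ * ((1 : Matrix a a ℂ) ⊗ₖ B)) = Matrix.trace (ptrace1 σ * B) := by
  simp only [Matrix.trace, Matrix.diag, Matrix.mul_apply, Matrix.kroneckerMap_apply,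
    Matrix.one_apply, ptrace1, Matrix.of_apply, Fintype.sum_prod_type, ite_mul, one_mul,
    zero_mul, mul_ite, mul_zero, Finset.sum_ite_irrel, Finset.sum_const_zero,
    Finset.sum_ite_eq', Finset.mem_univ, if_true, Finset.sum_mul]
  rw [Finset.sum_comm]
  exact Finset.sum_congr rfl fun y _ => Finset.sum_comm

lemma ext_of_trace_mul (M N : Matrix n n ℂ)
    (h : ∀ A, Matrix.trace (M * A) = Matrix.trace (N * A)) : M = N := by
  ext i j
  have h2 := h (Matrix.single j i 1)
  simpa [Matrix.trace, Matrix.diag, Matrix.mul_apply, Matrix.single, ite_and,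
    Finset.sum_ite_eq, Finset.sum_ite_eq'] using h2

lemma kron_sum_right {p q r s : Type*} {ι : Type*} (t : Finset ι) (A : Matrix p q ℂ)
    (B : ι → Matrix r s ℂ) : A ⊗ₖ (∑ i ∈ t, B i) = ∑ i ∈ t, A ⊗ₖ B i := by
  ext ⟨i, j⟩ ⟨k, l⟩
  simp [Matrix.kroneckerMap_apply, Matrix.sum_apply, Finset.mul_sum]

end TraceLemmas

section ChannelLemmas

variable {dT dX dY m : ℕ} (K : Fin m → Matrix (Fin dY) (Fin dX) ℂ)

lemma trace_mul_extChannelAdj (σ : Matrix (Fin dT × Fin dX) (Fin dT × Fin dX) ℂ)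
    (B : Matrix (Fin dT × Fin dY) (Fin dT × Fin dY) ℂ) :
    Matrix.trace (σ * extChannelAdj K B) = Matrix.trace (extChannel K σ * B) := by
  rw [extChannelAdj, extChannel, Finset.mul_sum, Finset.sum_mul, Matrix.trace_sum,
    Matrix.trace_sum]
  refine Finset.sum_congr rfl fun i _ => ?_
  rw [← Matrix.mul_assoc, ← Matrix.mul_assoc, Matrix.trace_mul_comm, ← Matrix.mul_assoc,
    ← Matrix.mul_assoc]

lemma trace_mul_channelAdj (ρ : Matrix (Fin dX) (Fin dX) ℂ) (B : Matrix (Fin dY) (Fin dY) ℂ) :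
    Matrix.trace (ρ * (∑ i, (K i)ᴴ * B * K i)) = Matrix.trace (channel K ρ * B) := by
  rw [channel, Finset.mul_sum, Finset.sum_mul, Matrix.trace_sum, Matrix.trace_sum]
  refine Finset.sum_congr rfl fun i _ => ?_
  rw [← Matrix.mul_assoc, ← Matrix.mul_assoc, Matrix.trace_mul_comm, ← Matrix.mul_assoc,
    ← Matrix.mul_assoc]

lemma extChannelAdj_kron_one (A : Matrix (Fin dT) (Fin dT) ℂ) (hK : ∑ i, (K i)ᴴ * K i = 1) :
    extChannelAdj (dT := dT) K (A ⊗ₖ (1 : Matrix (Fin dY) (Fin dY) ℂ))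
      = A ⊗ₖ (1 : Matrix (Fin dX) (Fin dX) ℂ) := by
  rw [extChannelAdj]
  have h : ∀ i : Fin m, ((1 : Matrix (Fin dT) (Fin dT) ℂ) ⊗ₖ K i)ᴴ
        * (A ⊗ₖ (1 : Matrix (Fin dY) (Fin dY) ℂ)) * ((1 : Matrix (Fin dT) (Fin dT) ℂ) ⊗ₖ K i)
      = A ⊗ₖ ((K i)ᴴ * K i) := by
    intro i
    rw [conjTranspose_kron', Matrix.conjTranspose_one, ← Matrix.mul_kronecker_mul,
      ← Matrix.mul_kronecker_mul, Matrix.one_mul, Matrix.mul_one, Matrix.mul_one]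
  simp only [h]
  rw [← kron_sum_right, hK]

lemma extChannelAdj_one_kron (B : Matrix (Fin dY) (Fin dY) ℂ) :
    extChannelAdj (dT := dT) K ((1 : Matrix (Fin dT) (Fin dT) ℂ) ⊗ₖ B)
      = (1 : Matrix (Fin dT) (Fin dT) ℂ) ⊗ₖ (∑ i, (K i)ᴴ * B * K i) := by
  rw [extChannelAdj, kron_sum_right]
  refine Finset.sum_congr rfl fun i _ => ?_
  rw [conjTranspose_kron', Matrix.conjTranspose_one, ← Matrix.mul_kronecker_mul,
    ← Matrix.mul_kronecker_mul, Matrix.one_mul, Matrix.mul_one]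

lemma ptrace2_extChannel (hK : ∑ i, (K i)ᴴ * K i = 1)
    (σ : Matrix (Fin dT × Fin dX) (Fin dT × Fin dX) ℂ) :
    ptrace2 (extChannel (dT := dT) K σ) = ptrace2 σ := by
  refine ext_of_trace_mul _ _ fun A => ?_
  rw [← trace_mul_kron_one, ← trace_mul_kron_one, ← trace_mul_extChannelAdj,
    extChannelAdj_kron_one K A hK]

lemma ptrace1_extChannel (σ : Matrix (Fin dT × Fin dX) (Fin dT × Fin dX) ℂ) :
    ptrace1 (extChannel (dT := dT) K σ) = channel K (ptrace1 σ) := by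
  refine ext_of_trace_mul _ _ fun B => ?_
  rw [← trace_mul_one_kron, ← trace_mul_extChannelAdj, extChannelAdj_one_kron,
    trace_mul_one_kron, trace_mul_channelAdj]

end ChannelLemmas

end QIBProof

/-- `Re Tr(σ_{TX} Ω_{α,β}(σ_{TX}))
= α I(T;X) + (1−α) H(T) − β I(T;Y)`. -/
theorem stmt12 {dT dX dY m : ℕ} (hdT : 1 ≤ dT) (hdX : 1 ≤ dX) (hdY : 1 ≤ dY)
    (K : Fin m → Matrix (Fin dY) (Fin dX) ℂ)
    (hK : ∑ i, (K i)ᴴ * K i = 1)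
    (α β : ℝ)
    (ρX : Matrix (Fin dX) (Fin dX) ℂ) (hρX : IsPDDensity ρX)
    (σ : Matrix (Fin dT × Fin dX) (Fin dT × Fin dX) ℂ)
    (hσ : IsDensity σ) (hσM : ptrace1 σ = ρX)
    (hσPD : σ.PosDef) (hσT : (ptrace2 σ).PosDef)
    (hσY : (extChannel (dT := dT) K σ).PosDef)
    (hRρX : (channel K ρX).PosDef) :
    (Matrix.trace (σ * OmegaIB K α β ρX σ)).re
      = α * mutualInfo σ + (1 - α) * vnEntropy (ptrace2 σ)
        - β * mutualInfo (extChannel (dT := dT) K σ) := by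
  classical
  open QIBProof in
  have hpt2w : ptrace2 (extChannel (dT := dT) K σ) = ptrace2 σ := ptrace2_extChannel K hK σ
  have hpt1w : ptrace1 (extChannel (dT := dT) K σ) = channel K ρX := by
    rw [ptrace1_extChannel K σ, hσM]
  have hsplit1 : mlog (ptrace2 σ ⊗ₖ ptrace1 σ)
      = mlog (ptrace2 σ) ⊗ₖ (1 : Matrix (Fin dX) (Fin dX) ℂ)
        + (1 : Matrix (Fin dT) (Fin dT) ℂ) ⊗ₖ mlog ρX := by
    rw [hσM]
    exact mlog_kron _ _ hσT hρX.1
  have hsplit2 : mlog (ptrace2 (extChannel (dT := dT) K σ) ⊗ₖ ptrace1 (extChannel (dT := dT) K σ))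
      = mlog (ptrace2 σ) ⊗ₖ (1 : Matrix (Fin dY) (Fin dY) ℂ)
        + (1 : Matrix (Fin dT) (Fin dT) ℂ) ⊗ₖ mlog (channel K ρX) := by
    rw [hpt2w, hpt1w]
    exact mlog_kron _ _ hσT hRρX
  have t2 : Matrix.trace (σ * ((1 : Matrix (Fin dT) (Fin dT) ℂ) ⊗ₖ mlog ρX))
      = Matrix.trace (ρX * mlog ρX) := by rw [trace_mul_one_kron, hσM]
  have t3 : Matrix.trace (σ * (mlog (ptrace2 σ) ⊗ₖ (1 : Matrix (Fin dX) (Fin dX) ℂ)))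
      = Matrix.trace (ptrace2 σ * mlog (ptrace2 σ)) := trace_mul_kron_one σ _
  have t5 : Matrix.trace (extChannel (dT := dT) K σ
        * ((1 : Matrix (Fin dT) (Fin dT) ℂ) ⊗ₖ mlog (channel K ρX)))
      = Matrix.trace (channel K ρX * mlog (channel K ρX)) := by
    rw [trace_mul_one_kron, hpt1w]
  have t6 : Matrix.trace (extChannel (dT := dT) K σ
        * (mlog (ptrace2 σ) ⊗ₖ (1 : Matrix (Fin dY) (Fin dY) ℂ)))
      = Matrix.trace (ptrace2 σ * mlog (ptrace2 σ)) := by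
    rw [trace_mul_kron_one, hpt2w]
  have t4 : Matrix.trace (σ * extChannelAdj K
        ((1 : Matrix (Fin dT) (Fin dT) ℂ) ⊗ₖ mlog (channel K ρX)
          - mlog (extChannel (dT := dT) K σ)))
      = Matrix.trace (channel K ρX * mlog (channel K ρX))
        - Matrix.trace (extChannel (dT := dT) K σ * mlog (extChannel (dT := dT) K σ)) := by
    rw [trace_mul_extChannelAdj, Matrix.mul_sub, Matrix.trace_sub, t5]
  rw [OmegaIB]
  simp only [mutualInfo, relEnt, vnEntropy, hsplit1, hsplit2]
  simp only [Matrix.mul_add, Matrix.mul_sub, Matrix.trace_add, Matrix.trace_sub,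
    Matrix.mul_smul, Matrix.trace_smul, t2, t3, t4, t5, t6]
  simp only [Complex.add_re, Complex.sub_re, Complex.smul_re, smul_eq_mul]
  ring

end
end

section
/- Let σ_{TX}, σ'_{TX} ∈ M(ρ_X) be positive definite such that σ_T, σ'_T, (id_T⊗R)(σ_{TX}), (id_T⊗R)(σ'_{TX}) and R(ρ_X) are positive definite. Then Re Tr(σ_{TX} (Ω_{α,β}(σ_{TX}) − Ω_{α,β}(σ'_{TX}))) = α D(σ_{TX}‖σ'_{TX}) + (β−1) D(σ_T‖σ'_T) − β D((id_T⊗R)(σ_{TX}) ‖ (id_T⊗R)(σ'_{TX})). -/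
noncomputable section
open scoped Matrix Kronecker ComplexOrder

/-! The identity is purely algebraic: the `ρX`-terms of `Ω` do not depend on its argument and
cancel in the difference, and the remaining terms are moved onto `σ` by the dualities
`Tr(σ (A ⊗ I)) = Tr(σ_T A)` and `Tr(σ R*(B)) = Tr(R(σ) B)`, which turns each pairing
`Tr(ω (log ω − log ω'))` into a relative entropy. -/

section TraceDuality

variable {ι l n : Type*} [Fintype ι] [Fintype l] [Fintype n]

lemma trace_mul_kronecker_one [DecidableEq n] (σ : Matrix (l × n) (l × n) ℂ)
    (A : Matrix l l ℂ) :
    Matrix.trace (σ * (A ⊗ₖ (1 : Matrix n n ℂ))) = Matrix.trace (ptrace2 σ * A) := by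
  simp only [Matrix.trace, Matrix.diag, Matrix.mul_apply, Matrix.kroneckerMap_apply,
    Matrix.one_apply, ptrace2, Matrix.of_apply, Fintype.sum_prod_type, mul_ite, mul_one,
    mul_zero, Finset.sum_ite_eq', Finset.mem_univ, if_true, Finset.sum_mul]
  exact Finset.sum_congr rfl fun _ _ => Finset.sum_comm

lemma trace_mul_sum_mul_mul {R : Type*} [CommSemiring R] (L : ι → Matrix l n R)
    (L' : ι → Matrix n l R) (A : Matrix n n R) (B : Matrix l l R) :
    Matrix.trace (A * ∑ i, L' i * B * L i) = Matrix.trace ((∑ i, L i * A * L' i) * B) := by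
  simp only [Matrix.mul_sum, Matrix.sum_mul, Matrix.trace_sum]
  refine Finset.sum_congr rfl fun i _ => ?_
  rw [← Matrix.mul_assoc, Matrix.trace_mul_cycle]
  simp only [Matrix.mul_assoc]

lemma trace_mul_extChannelAdj {dT dX dY m : ℕ} (K : Fin m → Matrix (Fin dY) (Fin dX) ℂ)
    (σ : Matrix (Fin dT × Fin dX) (Fin dT × Fin dX) ℂ)
    (B : Matrix (Fin dT × Fin dY) (Fin dT × Fin dY) ℂ) :
    Matrix.trace (σ * extChannelAdj K B) = Matrix.trace (extChannel K σ * B) :=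
  trace_mul_sum_mul_mul _ _ σ B

end TraceDuality

lemma trace_mul_OmegaIB {dT dX dY m : ℕ} (K : Fin m → Matrix (Fin dY) (Fin dX) ℂ) (α β : ℝ)
    (ρX : Matrix (Fin dX) (Fin dX) ℂ) (σ τ : Matrix (Fin dT × Fin dX) (Fin dT × Fin dX) ℂ) :
    Matrix.trace (σ * OmegaIB K α β ρX τ) =
      α • Matrix.trace (σ * mlog τ)
        - α • Matrix.trace (σ * ((1 : Matrix (Fin dT) (Fin dT) ℂ) ⊗ₖ mlog ρX))
        + (β - 1) • Matrix.trace (ptrace2 σ * mlog (ptrace2 τ))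
        + β • (Matrix.trace (extChannel K σ
              * ((1 : Matrix (Fin dT) (Fin dT) ℂ) ⊗ₖ mlog (channel K ρX)))
            - Matrix.trace (extChannel K σ * mlog (extChannel K τ))) := by
  simp only [OmegaIB, Matrix.mul_add, Matrix.mul_sub, Matrix.mul_smul, Matrix.trace_add,
    Matrix.trace_sub, Matrix.trace_smul, trace_mul_kronecker_one, trace_mul_extChannelAdj]

theorem stmt13_general {dT dX dY m : ℕ}
    (K : Fin m → Matrix (Fin dY) (Fin dX) ℂ)
    (α β : ℝ)
    (ρX : Matrix (Fin dX) (Fin dX) ℂ)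
    (σ σ' : Matrix (Fin dT × Fin dX) (Fin dT × Fin dX) ℂ) :
    (Matrix.trace (σ * (OmegaIB K α β ρX σ - OmegaIB K α β ρX σ'))).re
      = α * relEnt σ σ' + (β - 1) * relEnt (ptrace2 σ) (ptrace2 σ')
        - β * relEnt (extChannel (dT := dT) K σ) (extChannel (dT := dT) K σ') := by
  rw [Matrix.mul_sub, Matrix.trace_sub, trace_mul_OmegaIB, trace_mul_OmegaIB]
  simp only [relEnt, Matrix.mul_sub, Matrix.trace_sub, Complex.sub_re, Complex.add_re,
    Complex.real_smul, Complex.re_ofReal_mul]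
  ring

/-- `Re Tr(σ_{TX} (Ω_{α,β}(σ_{TX}) − Ω_{α,β}(σ'_{TX})))
= α D(σ_{TX}‖σ'_{TX}) + (β−1) D(σ_T‖σ'_T) − β D((id⊗R)σ ‖ (id⊗R)σ')`. -/
theorem stmt13 {dT dX dY m : ℕ} (hdT : 1 ≤ dT) (hdX : 1 ≤ dX) (hdY : 1 ≤ dY)
    (K : Fin m → Matrix (Fin dY) (Fin dX) ℂ)
    (hK : ∑ i, (K i)ᴴ * K i = 1)
    (α β : ℝ)
    (ρX : Matrix (Fin dX) (Fin dX) ℂ) (hρX : IsPDDensity ρX)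
    (σ σ' : Matrix (Fin dT × Fin dX) (Fin dT × Fin dX) ℂ)
    (hσ : IsDensity σ) (hσM : ptrace1 σ = ρX)
    (hσ' : IsDensity σ') (hσ'M : ptrace1 σ' = ρX)
    (hσPD : σ.PosDef) (hσ'PD : σ'.PosDef)
    (hσT : (ptrace2 σ).PosDef) (hσ'T : (ptrace2 σ').PosDef)
    (hσY : (extChannel (dT := dT) K σ).PosDef)
    (hσ'Y : (extChannel (dT := dT) K σ').PosDef)
    (hRρX : (channel K ρX).PosDef) :
    (Matrix.trace (σ * (OmegaIB K α β ρX σ - OmegaIB K α β ρX σ'))).re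
      = α * relEnt σ σ' + (β - 1) * relEnt (ptrace2 σ) (ptrace2 σ')
        - β * relEnt (extChannel (dT := dT) K σ) (extChannel (dT := dT) K σ') :=
  stmt13_general K α β ρX σ σ'

end
end

section
/- Let ρ_A be a positive definite density matrix on A and φ a purification of ρ_A on A⊗A'. Let σ_{AB} be any density matrix on A⊗B with Tr_B σ_{AB} = ρ_A. Then there exists a quantum channel E from A' to B, given by finitely many Kraus operators K_1,…,K_m with Σ_i K_i† K_i = I, such that (id_A⊗E)(|φ⟩⟨φ|) = σ_{AB}. -/
noncomputable section
open scoped Matrix Kronecker ComplexOrder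

/-- Every state `σ_{AB}` with `Tr_B σ_{AB} = ρ_A` arises from the
purification `φ` of `ρ_A` via some quantum channel from `A'` to `B`. -/
theorem stmt16 {dA dB : ℕ} (hdA : 1 ≤ dA) (hdB : 1 ≤ dB)
    (ρA : Matrix (Fin dA) (Fin dA) ℂ) (hρA : IsPDDensity ρA)
    (φ : Fin dA × Fin dA → ℂ) (hφunit : star φ ⬝ᵥ φ = 1)
    (hφ : ptrace2 (Matrix.vecMulVec φ (star φ)) = ρA)
    (σAB : Matrix (Fin dA × Fin dB) (Fin dA × Fin dB) ℂ)
    (hσAB : IsDensity σAB) (hσABρ : ptrace2 σAB = ρA) :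
    ∃ (m : ℕ) (K : Fin m → Matrix (Fin dB) (Fin dA) ℂ),
      (∑ i, (K i)ᴴ * K i = 1) ∧
        extChannel (dT := dA) K (Matrix.vecMulVec φ (star φ)) = σAB := by
  classical
  -- The purification as a matrix `F`, with `F * Fᴴ = ρA`.
  set F : Matrix (Fin dA) (Fin dA) ℂ := Matrix.of (fun i x => φ (i, x)) with hFdef
  have hFF : F * Fᴴ = ρA := by
    rw [← hφ]
    ext i j
    simp [Matrix.mul_apply, ptrace2, Matrix.vecMulVec_apply, Matrix.conjTranspose_apply, hFdef]
  have hdet : IsUnit F.det := by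
    have h1 : F.det * star F.det = ρA.det := by
      rw [← hFF, Matrix.det_mul, Matrix.det_conjTranspose]
    have h2 : ρA.det ≠ 0 := hρA.1.det_pos.ne'
    refine isUnit_iff_ne_zero.mpr fun h => h2 ?_
    rw [← h1, h, zero_mul]
  have hFG : F * F⁻¹ = 1 := Matrix.mul_nonsing_inv F hdet
  have hGF : F⁻¹ * F = 1 := Matrix.nonsing_inv_mul F hdet
  -- Decompose `σAB = Cᴴ * C` and extract the (unnormalized) eigenvector family `ψ`.
  obtain ⟨C, hC⟩ : ∃ C : Matrix (Fin dA × Fin dB) (Fin dA × Fin dB) ℂ, σAB = Cᴴ * C := by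
    open scoped MatrixOrder in
    exact ⟨CFC.sqrt σAB, by
      rw [← Matrix.star_eq_conjTranspose, (CFC.sqrt_nonneg σAB).isSelfAdjoint.star_eq,
        CFC.sqrt_mul_sqrt_self σAB hσAB.1.nonneg]⟩
  set ψ : (Fin dA × Fin dB) → (Fin dA × Fin dB) → ℂ := fun r u => star (C r u) with hψdef
  have hσψ : ∀ u v, (∑ r, ψ r u * star (ψ r v)) = σAB u v := by
    intro u v
    rw [hC]
    simp [Matrix.mul_apply, Matrix.conjTranspose_apply, hψdef]
  -- The vectors `ψ r` as matrices `Ψ r`, and the Kraus operators.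
  set Ψ : (Fin dA × Fin dB) → Matrix (Fin dA) (Fin dB) ℂ :=
    fun r => Matrix.of (fun j y => ψ r (j, y)) with hΨdef
  set Kmat : (Fin dA × Fin dB) → Matrix (Fin dB) (Fin dA) ℂ :=
    fun r => (F⁻¹ * Ψ r)ᵀ with hKdef
  have hKapply : ∀ (r : Fin dA × Fin dB) (y : Fin dB) (x : Fin dA),
      Kmat r y x = ∑ j, F⁻¹ x j * ψ r (j, y) := by
    intro r y x
    simp only [hKdef, Matrix.transpose_apply, Matrix.mul_apply, hΨdef, Matrix.of_apply]
  -- `Σ_r Ψ r (Ψ r)ᴴ = ρA` (from `Tr_B σ = ρA`).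
  have hΨsum : (∑ r : Fin dA × Fin dB, Ψ r * (Ψ r)ᴴ) = ρA := by
    rw [← hσABρ]
    ext i k
    rw [Matrix.sum_apply]
    have h1 : ∀ r : Fin dA × Fin dB,
        (Ψ r * (Ψ r)ᴴ) i k = ∑ y, ψ r (i, y) * star (ψ r (k, y)) := by
      intro r
      simp [Matrix.mul_apply, Matrix.conjTranspose_apply, hΨdef]
    simp only [h1]
    rw [Finset.sum_comm]
    simp only [ptrace2, Matrix.of_apply]
    exact Finset.sum_congr rfl fun y _ => hσψ _ _
  -- the Kraus operators applied to the purification give the `ψ r`.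
  have hmv : ∀ (r : Fin dA × Fin dB),
      ((1 : Matrix (Fin dA) (Fin dA) ℂ) ⊗ₖ Kmat r) *ᵥ φ = ψ r := by
    intro r
    funext u
    obtain ⟨i, y⟩ := u
    have step1 : (((1 : Matrix (Fin dA) (Fin dA) ℂ) ⊗ₖ Kmat r) *ᵥ φ) (i, y)
        = ∑ x, Kmat r y x * φ (i, x) := by
      simp only [Matrix.mulVec, dotProduct, Fintype.sum_prod_type,
        Matrix.kroneckerMap_apply, Matrix.one_apply]
      rw [Finset.sum_eq_single i]
      · simp
      · intro b _ hb
        simp [Ne.symm hb]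
      · simp
    rw [step1]
    calc ∑ x, Kmat r y x * φ (i, x)
        = ∑ x, ∑ j, (φ (i, x) * F⁻¹ x j) * ψ r (j, y) := by
          refine Finset.sum_congr rfl fun x _ => ?_
          rw [hKapply, Finset.sum_mul]
          exact Finset.sum_congr rfl fun j _ => by ring
      _ = ∑ j, (∑ x, φ (i, x) * F⁻¹ x j) * ψ r (j, y) := by
          rw [Finset.sum_comm]
          exact Finset.sum_congr rfl fun j _ => (Finset.sum_mul _ _ _).symm
      _ = ∑ j, (1 : Matrix (Fin dA) (Fin dA) ℂ) i j * ψ r (j, y) := by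
          refine Finset.sum_congr rfl fun j _ => ?_
          rw [← hFG]
          simp [Matrix.mul_apply, hFdef]
      _ = ψ r (i, y) := by simp [Matrix.one_apply]
  -- conjugation of a rank-one projector by a matrix
  have key : ∀ (M : Matrix (Fin dA × Fin dB) (Fin dA × Fin dA) ℂ) (v : Fin dA × Fin dA → ℂ),
      M * Matrix.vecMulVec v (star v) * Mᴴ
        = Matrix.vecMulVec (M *ᵥ v) (star (M *ᵥ v)) := by
    intro M v
    ext i j
    simp only [Matrix.mul_apply, Matrix.vecMulVec_apply, Matrix.conjTranspose_apply,
      Pi.star_apply, Matrix.mulVec, dotProduct, star_sum, star_mul',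
      Finset.sum_mul, Finset.mul_sum]
    exact Finset.sum_congr rfl fun b _ => Finset.sum_congr rfl fun a _ => by ring
  -- the equivalence reindexing the Kraus family by `Fin (dA * dB)`
  set e : Fin (dA * dB) ≃ Fin dA × Fin dB := finProdFinEquiv.symm with hedef
  refine ⟨dA * dB, fun i => Kmat (e i), ?_, ?_⟩
  · -- trace preservation
    rw [Equiv.sum_comp e (fun r => (Kmat r)ᴴ * Kmat r)]
    have htct : ∀ {p q : Type} [Fintype p] [Fintype q] (N : Matrix p q ℂ), Nᵀᴴ = Nᴴᵀ := by
      intro p q _ _ N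
      ext a b
      simp [Matrix.conjTranspose_apply, Matrix.transpose_apply]
    have hmap : ∀ r : Fin dA × Fin dB,
        (Kmat r)ᴴ * Kmat r
          = ((F⁻¹ * Ψ r) * (F⁻¹ * Ψ r)ᴴ)ᵀ := by
      intro r
      have : Kmat r = (F⁻¹ * Ψ r)ᵀ := rfl
      rw [this, htct, ← Matrix.transpose_mul]
    simp only [hmap]
    have hsum : (∑ r : Fin dA × Fin dB, (F⁻¹ * Ψ r) * (F⁻¹ * Ψ r)ᴴ) = 1 := by
      have : ∀ r : Fin dA × Fin dB,
          (F⁻¹ * Ψ r) * (F⁻¹ * Ψ r)ᴴ = F⁻¹ * (Ψ r * (Ψ r)ᴴ) * F⁻¹ᴴ := by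
        intro r
        rw [Matrix.conjTranspose_mul]
        simp only [Matrix.mul_assoc]
      simp only [this]
      rw [← Finset.sum_mul, ← Finset.mul_sum, hΨsum, ← hFF]
      calc F⁻¹ * (F * Fᴴ) * F⁻¹ᴴ = (F⁻¹ * F) * (Fᴴ * F⁻¹ᴴ) := by simp only [Matrix.mul_assoc]
        _ = (F⁻¹ * F) * (F⁻¹ * F)ᴴ := by rw [Matrix.conjTranspose_mul]
        _ = 1 := by rw [hGF]; simp
    have : (∑ r : Fin dA × Fin dB, ((F⁻¹ * Ψ r) * (F⁻¹ * Ψ r)ᴴ)ᵀ)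
        = ((∑ r : Fin dA × Fin dB, (F⁻¹ * Ψ r) * (F⁻¹ * Ψ r)ᴴ))ᵀ := by
      ext a b
      simp only [Matrix.sum_apply, Matrix.transpose_apply]
    rw [this, hsum, Matrix.transpose_one]
  · -- the channel reproduces σAB
    unfold extChannel
    rw [Equiv.sum_comp e (fun r => ((1 : Matrix (Fin dA) (Fin dA) ℂ) ⊗ₖ Kmat r)
      * Matrix.vecMulVec φ (star φ) * ((1 : Matrix (Fin dA) (Fin dA) ℂ) ⊗ₖ Kmat r)ᴴ)]
    have : ∀ r : Fin dA × Fin dB,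
        ((1 : Matrix (Fin dA) (Fin dA) ℂ) ⊗ₖ Kmat r) * Matrix.vecMulVec φ (star φ)
          * ((1 : Matrix (Fin dA) (Fin dA) ℂ) ⊗ₖ Kmat r)ᴴ
        = Matrix.vecMulVec (ψ r) (star (ψ r)) := by
      intro r
      rw [key, hmv]
    simp only [this]
    ext u v
    rw [Matrix.sum_apply]
    simp only [Matrix.vecMulVec_apply, Pi.star_apply]
    exact hσψ u v

end
end

section
/- Let ρ_A be a positive definite density matrix on A, φ a purification of ρ_A on A⊗A', and Ω̃ a continuous map from density matrices on A⊗B to Hermitian matrices on A⊗B. Then the infimum of Re Tr(σ_{AB} Ω̃(σ_{AB})) over all density matrices σ_{AB} on A⊗B with Tr_B σ_{AB} = ρ_A equals the infimum over all quantum channels E from A' to B (given by finitely many Kraus operators K_1,…,K_m with Σ_i K_i† K_i = I) of Re Tr[ (id_A⊗E)(|φ⟩⟨φ|) · Ω̃( (id_A⊗E)(|φ⟩⟨φ|) ) ]. -/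
noncomputable section
open scoped Matrix Kronecker ComplexOrder

lemma aux_conj_vecMulVec {m n : Type*} [Fintype m] [Fintype n] (B : Matrix m n ℂ) (v : n → ℂ) :
    B * Matrix.vecMulVec v (star v) * Bᴴ
      = Matrix.vecMulVec (B.mulVec v) (star (B.mulVec v)) := by
  ext x y
  simp only [Matrix.mul_apply, Matrix.vecMulVec_apply, Matrix.conjTranspose_apply,
    Matrix.mulVec, dotProduct, Pi.star_apply, star_sum, star_mul',
    Finset.sum_mul, Finset.mul_sum]
  exact Finset.sum_congr rfl fun k _ => Finset.sum_congr rfl fun j _ => by ring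

lemma aux_ptrace2_outer {m n : Type*} [Fintype m] [Fintype n] (u : m × n → ℂ) :
    ptrace2 (Matrix.vecMulVec u (star u))
      = (Matrix.of fun i b => u (i, b)) * (Matrix.of fun i b => u (i, b))ᴴ := by
  ext i j
  simp [ptrace2, Matrix.mul_apply, Matrix.vecMulVec_apply, Matrix.conjTranspose_apply]

lemma aux_ptrace2_sum {m n ι : Type*} [Fintype n] (s : Finset ι)
    (f : ι → Matrix (m × n) (m × n) ℂ) :
    ptrace2 (∑ i ∈ s, f i) = ∑ i ∈ s, ptrace2 (f i) := by
  ext a b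
  simp only [ptrace2, Matrix.of_apply, Matrix.sum_apply]
  exact Finset.sum_comm

lemma aux_trace_ptrace2 {m n : Type*} [Fintype m] [Fintype n]
    (A : Matrix (m × n) (m × n) ℂ) : (ptrace2 A).trace = A.trace := by
  simp [Matrix.trace, ptrace2, Matrix.diag, Fintype.sum_prod_type]

lemma aux_kron_mulVec {dT dX dY : ℕ} (K : Matrix (Fin dY) (Fin dX) ℂ)
    (v : Fin dT × Fin dX → ℂ) (M : Matrix (Fin dT) (Fin dX) ℂ)
    (hM : ∀ i a, M i a = v (i, a)) :
    Matrix.of (fun i b => ((1 : Matrix (Fin dT) (Fin dT) ℂ) ⊗ₖ K).mulVec v (i, b))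
      = M * Kᵀ := by
  ext i b
  simp only [Matrix.of_apply, Matrix.mulVec, dotProduct, Fintype.sum_prod_type,
    Matrix.kroneckerMap_apply, Matrix.one_apply, Matrix.mul_apply, Matrix.transpose_apply,
    ite_mul, one_mul, zero_mul, boole_mul]
  rw [Finset.sum_comm]
  simp [hM, mul_comm]

lemma aux_outer_psd {n : Type*} [Fintype n] (v : n → ℂ) :
    (Matrix.vecMulVec v (star v)).PosSemidef := by
  rw [Matrix.vecMulVec_eq (Fin 1), ← Matrix.conjTranspose_replicateCol]
  exact Matrix.posSemidef_self_mul_conjTranspose _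

lemma aux_ext_eq_sum_outer {dA dB m : ℕ} (K : Fin m → Matrix (Fin dB) (Fin dA) ℂ)
    (φ : Fin dA × Fin dA → ℂ) :
    extChannel (dT := dA) K (Matrix.vecMulVec φ (star φ))
      = ∑ c, Matrix.vecMulVec (((1 : Matrix (Fin dA) (Fin dA) ℂ) ⊗ₖ K c).mulVec φ)
          (star (((1 : Matrix (Fin dA) (Fin dA) ℂ) ⊗ₖ K c).mulVec φ)) :=
  Finset.sum_congr rfl fun c _ => aux_conj_vecMulVec _ _

lemma aux_ext_psd {dA dB m : ℕ} (K : Fin m → Matrix (Fin dB) (Fin dA) ℂ)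
    (φ : Fin dA × Fin dA → ℂ) :
    (extChannel (dT := dA) K (Matrix.vecMulVec φ (star φ))).PosSemidef := by
  rw [aux_ext_eq_sum_outer]
  exact Finset.sum_induction _ _ (fun a b ha hb => ha.add hb) Matrix.PosSemidef.zero
    (fun c _ => aux_outer_psd _)

lemma aux_marginal {dA dB m : ℕ} (ρA : Matrix (Fin dA) (Fin dA) ℂ)
    (φ : Fin dA × Fin dA → ℂ)
    (hφ : ptrace2 (Matrix.vecMulVec φ (star φ)) = ρA)
    (K : Fin m → Matrix (Fin dB) (Fin dA) ℂ)
    (hK : ∑ i, (K i)ᴴ * K i = 1) :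
    ptrace2 (extChannel (dT := dA) K (Matrix.vecMulVec φ (star φ))) = ρA := by
  set M : Matrix (Fin dA) (Fin dA) ℂ := Matrix.of fun i a => φ (i, a) with hMdef
  have hM : ∀ i a, M i a = φ (i, a) := fun _ _ => rfl
  have hMM : M * Mᴴ = ρA := by
    rw [← hφ]; ext i j
    simp [Matrix.mul_apply, ptrace2, Matrix.conjTranspose_apply, Matrix.vecMulVec_apply, hM]
  rw [aux_ext_eq_sum_outer, aux_ptrace2_sum]
  have h1 : ∀ c, ptrace2 (Matrix.vecMulVec (((1 : Matrix (Fin dA) (Fin dA) ℂ) ⊗ₖ K c).mulVec φ)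
      (star (((1 : Matrix (Fin dA) (Fin dA) ℂ) ⊗ₖ K c).mulVec φ)))
      = M * ((K c)ᴴ * K c)ᵀ * Mᴴ := by
    intro c
    rw [aux_ptrace2_outer, aux_kron_mulVec (K c) φ M hM, Matrix.conjTranspose_mul,
      Matrix.transpose_mul]
    have : ((K c)ᵀ)ᴴ = ((K c)ᴴ)ᵀ := rfl
    rw [this]
    simp only [Matrix.mul_assoc]
  simp only [h1]
  rw [← Finset.sum_mul, ← Finset.mul_sum, ← Matrix.transpose_sum, hK, Matrix.transpose_one,
    Matrix.mul_one, hMM]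

lemma aux_exists_channel {dA dB : ℕ}
    (ρA : Matrix (Fin dA) (Fin dA) ℂ) (hρA : ρA.PosDef)
    (φ : Fin dA × Fin dA → ℂ)
    (hφ : ptrace2 (Matrix.vecMulVec φ (star φ)) = ρA)
    (σ : Matrix (Fin dA × Fin dB) (Fin dA × Fin dB) ℂ) (hσ : σ.PosSemidef)
    (hmar : ptrace2 σ = ρA) :
    ∃ K : Fin (dA * dB) → Matrix (Fin dB) (Fin dA) ℂ,
      (∑ i, (K i)ᴴ * K i = 1) ∧
        extChannel (dT := dA) K (Matrix.vecMulVec φ (star φ)) = σ := by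
  classical
  open scoped MatrixOrder in
  set S : Matrix (Fin dA × Fin dB) (Fin dA × Fin dB) ℂ := CFC.sqrt σ with hSdef
  open scoped MatrixOrder in
  have hS : S * S = σ := CFC.sqrt_mul_sqrt_self σ hσ.nonneg
  open scoped MatrixOrder in
  have hSh : Sᴴ = S := (Matrix.nonneg_iff_posSemidef.mp (CFC.sqrt_nonneg σ)).1
  have hSc : ∀ u v, star (S v u) = S u v := by
    intro u v
    conv_rhs => rw [← hSh]
    simp [Matrix.conjTranspose_apply]
  clear_value S
  set M : Matrix (Fin dA) (Fin dA) ℂ := Matrix.of fun i a => φ (i, a) with hMdef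
  have hM : ∀ i a, M i a = φ (i, a) := fun _ _ => rfl
  have hMM : M * Mᴴ = ρA := by
    rw [← hφ]; ext i j
    simp [Matrix.mul_apply, ptrace2, Matrix.conjTranspose_apply, Matrix.vecMulVec_apply, hM]
  have hMunit : IsUnit M.det := by
    have h1 : IsUnit ρA := hρA.isUnit
    rw [← hMM, Matrix.isUnit_iff_isUnit_det, Matrix.det_mul] at h1
    exact (IsUnit.mul_iff.mp h1).1
  have hMHunit : IsUnit (Mᴴ).det := by
    rw [Matrix.det_conjTranspose]
    exact hMunit.star
  clear_value M
  set N : Matrix (Fin dA) (Fin dB × (Fin dA × Fin dB)) ℂ :=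
    Matrix.of fun i y => S (i, y.1) y.2 with hNdef
  have hNN : N * Nᴴ = ρA := by
    rw [← hmar, ← hS]; ext i j
    simp only [Matrix.mul_apply, ptrace2, Matrix.of_apply, Matrix.conjTranspose_apply,
      Fintype.sum_prod_type, hNdef]
    simp only [hSc]
  set W : Matrix (Fin dA) (Fin dB × (Fin dA × Fin dB)) ℂ := M⁻¹ * N with hWdef
  have hMW : M * W = N := by
    rw [hWdef, ← Matrix.mul_assoc, Matrix.mul_nonsing_inv _ hMunit, Matrix.one_mul]
  have hWW : W * Wᴴ = 1 := by
    rw [hWdef, Matrix.conjTranspose_mul, Matrix.conjTranspose_nonsing_inv]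
    calc M⁻¹ * N * (Nᴴ * Mᴴ⁻¹) = M⁻¹ * (N * Nᴴ) * Mᴴ⁻¹ := by
          simp only [Matrix.mul_assoc]
      _ = M⁻¹ * (M * (Mᴴ * Mᴴ⁻¹)) := by
          rw [hNN, ← hMM]; simp only [Matrix.mul_assoc]
      _ = 1 := by
          rw [Matrix.mul_nonsing_inv _ hMHunit, Matrix.mul_one,
            Matrix.nonsing_inv_mul _ hMunit]
  clear_value W
  set e : Fin (dA * dB) ≃ Fin dA × Fin dB := finProdFinEquiv.symm with hedef
  clear_value e
  refine ⟨fun c => Matrix.of fun b a => W a (b, e c), ?_, ?_⟩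
  · ext a a'
    simp only [Matrix.sum_apply, Matrix.mul_apply, Matrix.conjTranspose_apply,
      Matrix.of_apply]
    have h2 : star ((W * Wᴴ) a a') = star ((1 : Matrix (Fin dA) (Fin dA) ℂ) a a') := by
      rw [hWW]
    rw [Matrix.mul_apply] at h2
    simp only [star_sum, star_mul', star_star, Matrix.conjTranspose_apply] at h2
    calc ∑ c, ∑ b, star (W a (b, e c)) * W a' (b, e c)
        = ∑ w : Fin dA × Fin dB, ∑ b, star (W a (b, w)) * W a' (b, w) :=
          Equiv.sum_comp e (fun w => ∑ b, star (W a (b, w)) * W a' (b, w))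
      _ = ∑ b, ∑ w : Fin dA × Fin dB, star (W a (b, w)) * W a' (b, w) := Finset.sum_comm
      _ = ∑ y : Fin dB × (Fin dA × Fin dB), star (W a y) * W a' y :=
          (Fintype.sum_prod_type fun y => star (W a y) * W a' y).symm
      _ = (1 : Matrix (Fin dA) (Fin dA) ℂ) a a' := by
          rw [h2]
          simp [Matrix.one_apply, apply_ite (starRingEnd ℂ)]
  · have hu : ∀ (c : Fin (dA * dB)) i b,
        (((1 : Matrix (Fin dA) (Fin dA) ℂ) ⊗ₖ Matrix.of fun b a => W a (b, e c)).mulVec φ) (i, b)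
          = S (i, b) (e c) := by
      intro c i b
      have h3 := congrFun (aux_kron_mulVec (Matrix.of fun b a => W a (b, e c)) φ M hM)
      have h4 := congrFun (h3 i) b
      simp only [Matrix.of_apply] at h4
      rw [h4]
      have h5 : (M * (Matrix.of fun b a => W a (b, e c))ᵀ) i b = (M * W) i (b, e c) := by
        simp [Matrix.mul_apply]
      rw [h5, hMW]
      rfl
    rw [aux_ext_eq_sum_outer]
    ext ⟨i, b⟩ ⟨j, b'⟩
    simp only [Matrix.sum_apply, Matrix.vecMulVec_apply, Pi.star_apply, hu]
    calc ∑ c, S (i, b) (e c) * star (S (j, b') (e c))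
        = ∑ w : Fin dA × Fin dB, S (i, b) w * star (S (j, b') w) :=
          Equiv.sum_comp e (fun w => S (i, b) w * star (S (j, b') w))
      _ = σ (i, b) (j, b') := by
          rw [← hS, Matrix.mul_apply]
          exact Finset.sum_congr rfl fun w _ => by rw [hSc]

/-- The infimum of the objective over states with fixed marginal `ρ_A`
equals its infimum over quantum channels applied to a purification of `ρ_A`. -/
theorem stmt17 {dA dB : ℕ} (hdA : 1 ≤ dA) (hdB : 1 ≤ dB)
    (ρA : Matrix (Fin dA) (Fin dA) ℂ) (hρA : IsPDDensity ρA)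
    (φ : Fin dA × Fin dA → ℂ) (hφunit : star φ ⬝ᵥ φ = 1)
    (hφ : ptrace2 (Matrix.vecMulVec φ (star φ)) = ρA)
    (Ωt : Matrix (Fin dA × Fin dB) (Fin dA × Fin dB) ℂ →
      Matrix (Fin dA × Fin dB) (Fin dA × Fin dB) ℂ)
    (hΩtcont : Continuous Ωt)
    (hΩtherm : ∀ σ, IsDensity σ → (Ωt σ).IsHermitian) :
    sInf {x : ℝ | ∃ σAB : Matrix (Fin dA × Fin dB) (Fin dA × Fin dB) ℂ,
        IsDensity σAB ∧ ptrace2 σAB = ρA ∧ x = (Matrix.trace (σAB * Ωt σAB)).re}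
      = sInf {x : ℝ | ∃ (m : ℕ) (K : Fin m → Matrix (Fin dB) (Fin dA) ℂ),
          (∑ i, (K i)ᴴ * K i = 1) ∧
            x = (Matrix.trace
              (extChannel (dT := dA) K (Matrix.vecMulVec φ (star φ))
                * Ωt (extChannel (dT := dA) K (Matrix.vecMulVec φ (star φ))))).re} := by
  have hset : {x : ℝ | ∃ σAB : Matrix (Fin dA × Fin dB) (Fin dA × Fin dB) ℂ,
        IsDensity σAB ∧ ptrace2 σAB = ρA ∧ x = (Matrix.trace (σAB * Ωt σAB)).re}
      = {x : ℝ | ∃ (m : ℕ) (K : Fin m → Matrix (Fin dB) (Fin dA) ℂ),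
          (∑ i, (K i)ᴴ * K i = 1) ∧
            x = (Matrix.trace
              (extChannel (dT := dA) K (Matrix.vecMulVec φ (star φ))
                * Ωt (extChannel (dT := dA) K (Matrix.vecMulVec φ (star φ))))).re} := by
    ext x
    constructor
    · rintro ⟨σAB, ⟨hpsd, htr⟩, hmar, rfl⟩
      obtain ⟨K, hK, hKeq⟩ := aux_exists_channel ρA hρA.1 φ hφ σAB hpsd hmar
      exact ⟨dA * dB, K, hK, by rw [hKeq]⟩
    · rintro ⟨m, K, hK, rfl⟩
      refine ⟨extChannel (dT := dA) K (Matrix.vecMulVec φ (star φ)),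
        ⟨aux_ext_psd K φ, ?_⟩, aux_marginal ρA φ hφ K hK, rfl⟩
      rw [← aux_trace_ptrace2, aux_marginal ρA φ hφ K hK, hρA.2]
  rw [hset]


end
end
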